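/- arXiv:2508.15051 — 2 statements merged into one kernel-verified Lean document; each statement's English description precedes it below -/
import Mathlib

section
/- Let n, d ≥ 1, r > 0, λ ∈ [0,1]^n, and let P be a probability measure on ℝ^d supported in the closed Euclidean ball of radius r centered at the origin. Let Z₁,…,Zₙ be a λ-contaminated sample of P. Then for every weight vector w ∈ Δₙ, the variance term satisfies E[‖Σᵢ wᵢ(Zᵢ − E[Zᵢ])‖₂²] ≤ 7r²‖w‖₂² + 16r²(wᵀλ)². -/
/-!
Write `Zᵢ = Xᵢ + Bᵢ • (X̃ᵢ - Xᵢ)`. The centred weighted sum splits into the centred clean part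
`∑ wᵢ (Xᵢ - E Xᵢ)` and the centred outlier part `T - E T` with `T = ∑ wᵢ Bᵢ (X̃ᵢ - Xᵢ)`, and
`‖a + b‖² ≤ 2‖a‖² + 2‖b‖²`. By pairwise independence the clean part has second moment
`∑ wᵢ² E‖Xᵢ - E Xᵢ‖² ≤ r² ‖w‖²`. Centring does not increase the second moment and
`‖T‖ ≤ 2r ∑ wᵢ Bᵢ`, so the outlier part has second moment at most `4r² E(∑ wᵢ Bᵢ)²`; as the `Bᵢ`
are independent Bernoulli variables this equals `4r² (∑ wᵢ² λᵢ (1 - λᵢ) + (wᵀλ)²)`, which is at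
most `r² ‖w‖² + 4r² (wᵀλ)²`. Altogether the bound is `4r² ‖w‖² + 8r² (wᵀλ)²`.
-/

open MeasureTheory ProbabilityTheory

noncomputable section

/-- The family of codomain types used to express the mutual independence of the clean samples
`X₁,…,Xₙ` (valued in `E`) and the Bernoulli contamination indicators `B₁,…,Bₙ` (valued in `ℝ`). -/
abbrev MixFam (E : Type) (n : ℕ) : Fin n ⊕ Fin n → Type
  | .inl _ => E
  | .inr _ => ℝ

/-- The measurable-space structures on the codomains. -/
def mixMS (E : Type) [MeasurableSpace E] (n : ℕ) :
    ∀ j : Fin n ⊕ Fin n, MeasurableSpace (MixFam E n j)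
  | .inl _ => (inferInstance : MeasurableSpace E)
  | .inr _ => (inferInstance : MeasurableSpace ℝ)

/-- The combined family `(X₁,…,Xₙ,B₁,…,Bₙ)`. -/
def mixFun {Ω : Type*} {E : Type} {n : ℕ} (X : Fin n → Ω → E) (B : Fin n → Ω → ℝ) :
    ∀ j : Fin n ⊕ Fin n, Ω → MixFam E n j
  | .inl i => X i
  | .inr i => B i

/-- `Z₁,…,Zₙ` is a `λ`-contaminated sample of `P` (a measure on a normed space `E`,
supported in the ball of radius `r`): there are clean i.i.d. samples `Xᵢ ∼ P`, Bernoulli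
variables `Bᵢ` with `P(Bᵢ = 1) = λᵢ`, mutually independent of the `Xᵢ`'s, and arbitrary
(measurable) outliers `X̃ᵢ` with `‖X̃ᵢ‖ ≤ r` a.s., such that
`Zᵢ = (1 − Bᵢ)Xᵢ + BᵢX̃ᵢ`. -/
def IsContamSample {Ω : Type*} {E : Type} [MeasurableSpace Ω] [MeasurableSpace E]
    [NormedAddCommGroup E] [NormedSpace ℝ E]
    (Pr : Measure Ω) {n : ℕ} (P : Measure E) (r : ℝ) (lam : Fin n → ℝ)
    (X Xt : Fin n → Ω → E) (B : Fin n → Ω → ℝ) (Z : Fin n → Ω → E) : Prop :=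
  (∀ i, Measurable (X i)) ∧ (∀ i, Measurable (B i)) ∧ (∀ i, Measurable (Xt i)) ∧
  (∀ i, Measure.map (X i) Pr = P) ∧
  (∀ i ω, B i ω = 0 ∨ B i ω = 1) ∧
  (∀ i, Pr {ω | B i ω = 1} = ENNReal.ofReal (lam i)) ∧
  iIndepFun (m := mixMS E n) (mixFun X B) Pr ∧
  (∀ i, ∀ᵐ ω ∂Pr, ‖Xt i ω‖ ≤ r) ∧
  (∀ i ω, Z i ω = (1 - B i ω) • X i ω + (B i ω) • Xt i ω)

open scoped RealInnerProductSpace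

section SecondMoments

variable {Ω E : Type*} [MeasurableSpace Ω] {μ : Measure Ω} [NormedAddCommGroup E]

lemma integral_norm_add_sq_le {f g : Ω → E} (hf : MemLp f 2 μ) (hg : MemLp g 2 μ) :
    ∫ ω, ‖f ω + g ω‖ ^ 2 ∂μ ≤ 2 * ∫ ω, ‖f ω‖ ^ 2 ∂μ + 2 * ∫ ω, ‖g ω‖ ^ 2 ∂μ := by
  have hf2 := hf.integrable_norm_pow two_ne_zero
  have hg2 := hg.integrable_norm_pow two_ne_zero
  rw [← integral_const_mul, ← integral_const_mul,
    ← integral_add (hf2.const_mul 2) (hg2.const_mul 2)]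
  refine integral_mono ((hf.add hg).integrable_norm_pow two_ne_zero)
    ((hf2.const_mul 2).add (hg2.const_mul 2)) fun ω => ?_
  calc ‖f ω + g ω‖ ^ 2 ≤ (‖f ω‖ + ‖g ω‖) ^ 2 := by gcongr; exact norm_add_le _ _
    _ ≤ 2 * ‖f ω‖ ^ 2 + 2 * ‖g ω‖ ^ 2 := add_sq_le.trans_eq (mul_add _ _ _)

variable [InnerProductSpace ℝ E]

lemma MeasureTheory.MemLp.integrable_inner {f g : Ω → E} (hf : MemLp f 2 μ) (hg : MemLp g 2 μ) :
    Integrable (fun ω => ⟪f ω, g ω⟫) μ := by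
  rw [← memLp_one_iff_integrable]
  exact hf.of_bilin (fun x y => ⟪x, y⟫) 1 hg (hf.1.inner hg.1)
    (ae_of_all _ fun ω => by simpa using nnnorm_inner_le_nnnorm (𝕜 := ℝ) (f ω) (g ω))

lemma norm_sum_smul_sq {ι : Type*} (s : Finset ι) (w : ι → ℝ) (v : ι → E) :
    ‖∑ i ∈ s, w i • v i‖ ^ 2 = ∑ i ∈ s, ∑ j ∈ s, w i * w j * ⟪v i, v j⟫ := by
  rw [← real_inner_self_eq_norm_sq, sum_inner]
  simp_rw [inner_sum, real_inner_smul_left, real_inner_smul_right, mul_assoc]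

variable [CompleteSpace E]

lemma integral_norm_sub_integral_sq_le [IsProbabilityMeasure μ] {f : Ω → E} (hf : MemLp f 2 μ) :
    ∫ ω, ‖f ω - μ[f]‖ ^ 2 ∂μ ≤ ∫ ω, ‖f ω‖ ^ 2 ∂μ := by
  set m := μ[f]
  have hf1 := hf.integrable one_le_two
  have hf2 := hf.integrable_norm_pow two_ne_zero
  have hinner : Integrable (fun ω => 2 * ⟪f ω, m⟫) μ := (hf1.inner_const m).const_mul 2
  have hmean : ∫ ω, ⟪f ω, m⟫ ∂μ = ⟪m, m⟫ := by
    simpa only [real_inner_comm m] using integral_inner hf1 m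
  calc ∫ ω, ‖f ω - m‖ ^ 2 ∂μ = ∫ ω, ‖f ω‖ ^ 2 ∂μ - 2 * ⟪m, m⟫ + ‖m‖ ^ 2 := by
        simp_rw [norm_sub_sq_real]
        rw [integral_add (hf2.sub hinner : Integrable (fun ω => _ - _) μ) (integrable_const _),
          integral_sub hf2 hinner, integral_const_mul, hmean, integral_const,
          probReal_univ, one_smul]
    _ = ∫ ω, ‖f ω‖ ^ 2 ∂μ - ‖m‖ ^ 2 := by rw [real_inner_self_eq_norm_sq]; ring
    _ ≤ ∫ ω, ‖f ω‖ ^ 2 ∂μ := sub_le_self _ (sq_nonneg _)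

variable [MeasurableSpace E] [BorelSpace E] [IsProbabilityMeasure μ]

lemma ProbabilityTheory.IndepFun.integral_inner_sub_integral_eq_zero {X Y : Ω → E}
    (hXY : X ⟂ᵢ[μ] Y) (hX : Integrable X μ) (hY : Integrable Y μ) :
    ∫ ω, ⟪X ω - μ[X], Y ω - μ[Y]⟫ ∂μ = 0 := by
  have hsub : (fun ω => X ω - μ[X]) ⟂ᵢ[μ] (fun ω => Y ω - μ[Y]) :=
    hXY.comp (measurable_id.sub_const _) (measurable_id.sub_const _)
  have hX0 : ∫ ω, X ω - μ[X] ∂μ = 0 := by simp [integral_sub hX (integrable_const _)]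
  have := hsub.integral_bilin (hX.sub (integrable_const _)) (hY.sub (integrable_const _))
    (innerSL ℝ)
  rwa [hX0, map_zero, zero_apply] at this

lemma integral_norm_sum_smul_sub_integral_sq {ι : Type*} [Fintype ι] {Y : ι → Ω → E}
    (hY : ∀ i, MemLp (Y i) 2 μ) (hindep : Pairwise fun i j => Y i ⟂ᵢ[μ] Y j) (w : ι → ℝ) :
    ∫ ω, ‖∑ i, w i • (Y i ω - μ[Y i])‖ ^ 2 ∂μ =
      ∑ i, w i ^ 2 * ∫ ω, ‖Y i ω - μ[Y i]‖ ^ 2 ∂μ := by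
  have hU i : MemLp (fun ω => Y i ω - μ[Y i]) 2 μ := (hY i).sub (memLp_const _)
  have hint i j : Integrable (fun ω => w i * w j * ⟪Y i ω - μ[Y i], Y j ω - μ[Y j]⟫) μ :=
    ((hU i).integrable_inner (hU j)).const_mul _
  simp_rw [norm_sum_smul_sq]
  rw [integral_finsetSum _ fun i _ => integrable_finsetSum _ fun j _ => hint i j]
  refine Finset.sum_congr rfl fun i _ => ?_
  rw [integral_finsetSum _ fun j _ => hint i j, Finset.sum_eq_single i]
  · simp_rw [real_inner_self_eq_norm_sq, integral_const_mul]
    ring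
  · intro j _ hji
    rw [integral_const_mul, (hindep hji.symm).integral_inner_sub_integral_eq_zero
      ((hY i).integrable one_le_two) ((hY j).integrable one_le_two), mul_zero]
  · simp

end SecondMoments

namespace IsContamSample

-- `clean` refers to the samples `X`, `outlier` to `Xt` and `flag` to the indicators `B`.

variable {Ω : Type*} {E : Type} [MeasurableSpace Ω] {Pr : Measure Ω} [NormedAddCommGroup E]
  [InnerProductSpace ℝ E] [MeasurableSpace E] {n : ℕ} {P : Measure E} {r : ℝ}
  {lam : Fin n → ℝ} {X Xt : Fin n → Ω → E} {B : Fin n → Ω → ℝ} {Z : Fin n → Ω → E}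

lemma measurable_clean (h : IsContamSample Pr P r lam X Xt B Z) (i : Fin n) :
    Measurable (X i) := h.1 i

lemma measurable_flag (h : IsContamSample Pr P r lam X Xt B Z) (i : Fin n) :
    Measurable (B i) := h.2.1 i

lemma measurable_outlier (h : IsContamSample Pr P r lam X Xt B Z) (i : Fin n) :
    Measurable (Xt i) := h.2.2.1 i

lemma flag_eq_zero_or_one (h : IsContamSample Pr P r lam X Xt B Z) (i : Fin n) (ω : Ω) :
    B i ω = 0 ∨ B i ω = 1 := h.2.2.2.2.1 i ω

lemma ae_norm_outlier_le (h : IsContamSample Pr P r lam X Xt B Z) (i : Fin n) :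
    ∀ᵐ ω ∂Pr, ‖Xt i ω‖ ≤ r := h.2.2.2.2.2.2.2.1 i

lemma ae_norm_clean_le (h : IsContamSample Pr P r lam X Xt B Z) (hP : ∀ᵐ x ∂P, ‖x‖ ≤ r)
    (i : Fin n) : ∀ᵐ ω ∂Pr, ‖X i ω‖ ≤ r :=
  ae_of_ae_map (h.measurable_clean i).aemeasurable (h.2.2.2.1 i ▸ hP)

lemma indepFun_clean (h : IsContamSample Pr P r lam X Xt B Z) {i j : Fin n} (hij : i ≠ j) :
    X i ⟂ᵢ[Pr] X j :=
  h.2.2.2.2.2.2.1.indepFun (show (Sum.inl i : Fin n ⊕ Fin n) ≠ Sum.inl j by simpa using hij)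

lemma indepFun_flag (h : IsContamSample Pr P r lam X Xt B Z) {i j : Fin n} (hij : i ≠ j) :
    B i ⟂ᵢ[Pr] B j :=
  h.2.2.2.2.2.2.1.indepFun (show (Sum.inr i : Fin n ⊕ Fin n) ≠ Sum.inr j by simpa using hij)

lemma eq_add_flag_smul (h : IsContamSample Pr P r lam X Xt B Z) (i : Fin n) (ω : Ω) :
    Z i ω = X i ω + B i ω • (Xt i ω - X i ω) := by
  rw [h.2.2.2.2.2.2.2.2 i ω, sub_smul, one_smul, smul_sub]
  abel

lemma flag_nonneg (h : IsContamSample Pr P r lam X Xt B Z) (i : Fin n) (ω : Ω) :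
    0 ≤ B i ω := by
  rcases h.flag_eq_zero_or_one i ω with hB | hB <;> simp [hB]

lemma flag_le_one (h : IsContamSample Pr P r lam X Xt B Z) (i : Fin n) (ω : Ω) :
    B i ω ≤ 1 := by
  rcases h.flag_eq_zero_or_one i ω with hB | hB <;> simp [hB]

lemma flag_sq (h : IsContamSample Pr P r lam X Xt B Z) (i : Fin n) (ω : Ω) :
    B i ω ^ 2 = B i ω := by
  rcases h.flag_eq_zero_or_one i ω with hB | hB <;> simp [hB]

lemma integral_flag (h : IsContamSample Pr P r lam X Xt B Z) {i : Fin n} (hlam : 0 ≤ lam i) :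
    Pr[B i] = lam i := by
  have hset : MeasurableSet {ω | B i ω = 1} := h.measurable_flag i (measurableSet_singleton 1)
  have hind : B i = Set.indicator {ω | B i ω = 1} 1 := by
    funext ω
    rcases h.flag_eq_zero_or_one i ω with hB | hB <;> simp [hB]
  rw [hind, integral_indicator_one hset,
    measureReal_def, h.2.2.2.2.2.1 i, ENNReal.toReal_ofReal hlam]

lemma ae_norm_outlier_sub_clean_le (h : IsContamSample Pr P r lam X Xt B Z)
    (hP : ∀ᵐ x ∂P, ‖x‖ ≤ r) (i : Fin n) : ∀ᵐ ω ∂Pr, ‖Xt i ω - X i ω‖ ≤ 2 * r := by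
  filter_upwards [h.ae_norm_outlier_le i, h.ae_norm_clean_le hP i] with ω hXt hX
  linarith [norm_sub_le (Xt i ω) (X i ω)]

variable [IsProbabilityMeasure Pr]

lemma memLp_flag (h : IsContamSample Pr P r lam X Xt B Z) (i : Fin n) : MemLp (B i) 2 Pr :=
  MemLp.of_bound (h.measurable_flag i).aestronglyMeasurable 1 <| ae_of_all _ fun ω => by
    rw [Real.norm_eq_abs, abs_of_nonneg (h.flag_nonneg i ω)]
    exact h.flag_le_one i ω

lemma variance_flag (h : IsContamSample Pr P r lam X Xt B Z) {i : Fin n} (hlam : 0 ≤ lam i) :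
    Var[B i; Pr] = lam i * (1 - lam i) := by
  rw [variance_eq_sub (h.memLp_flag i)]
  simp only [Pi.pow_apply, h.flag_sq, h.integral_flag hlam]
  ring

lemma memLp_sum_mul_flag (h : IsContamSample Pr P r lam X Xt B Z) (w : Fin n → ℝ) :
    MemLp (fun ω => ∑ i, w i * B i ω) 2 Pr :=
  memLp_finsetSum _ fun i _ => (h.memLp_flag i).const_mul (w i)

lemma integral_sq_sum_mul_flag_le (h : IsContamSample Pr P r lam X Xt B Z)
    (hlam : ∀ i, 0 ≤ lam i) (w : Fin n → ℝ) :
    ∫ ω, (∑ i, w i * B i ω) ^ 2 ∂Pr ≤ (∑ i, w i ^ 2) / 4 + (∑ i, w i * lam i) ^ 2 := by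
  have hmem i : MemLp (fun ω => w i * B i ω) 2 Pr := (h.memLp_flag i).const_mul _
  have hmean : ∫ ω, ∑ i, w i * B i ω ∂Pr = ∑ i, w i * lam i := by
    rw [integral_finsetSum _ fun i _ => (hmem i).integrable one_le_two]
    simp_rw [integral_const_mul, h.integral_flag (hlam _)]
  have hvar : Var[fun ω => ∑ i, w i * B i ω; Pr] = ∑ i, w i ^ 2 * (lam i * (1 - lam i)) := by
    have := IndepFun.variance_sum (s := Finset.univ) (fun i _ => hmem i)
      fun i _ j _ hij => (h.indepFun_flag hij).comp (measurable_const_mul (w i))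
        (measurable_const_mul (w j))
    simpa [← Finset.sum_fn, variance_const_mul, h.variance_flag (hlam _)] using this
  have hsq : ∫ ω, (∑ i, w i * B i ω) ^ 2 ∂Pr =
      ∑ i, w i ^ 2 * (lam i * (1 - lam i)) + (∑ i, w i * lam i) ^ 2 := by
    rw [← hvar, variance_eq_sub (h.memLp_sum_mul_flag w), hmean]
    simp
  rw [hsq, Finset.sum_div]
  gcongr with i
  nlinarith [mul_nonneg (sq_nonneg (w i)) (sq_nonneg (lam i - 1 / 2))]

variable [SecondCountableTopology E] [BorelSpace E]

lemma memLp_clean (h : IsContamSample Pr P r lam X Xt B Z) (hP : ∀ᵐ x ∂P, ‖x‖ ≤ r)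
    (i : Fin n) : MemLp (X i) 2 Pr :=
  .of_bound (h.measurable_clean i).aestronglyMeasurable r (h.ae_norm_clean_le hP i)

lemma integral_norm_clean_sq_le (h : IsContamSample Pr P r lam X Xt B Z)
    (hP : ∀ᵐ x ∂P, ‖x‖ ≤ r) (i : Fin n) : ∫ ω, ‖X i ω‖ ^ 2 ∂Pr ≤ r ^ 2 := by
  have := integral_mono_ae ((h.memLp_clean hP i).integrable_norm_pow two_ne_zero)
    (integrable_const (r ^ 2)) <| (h.ae_norm_clean_le hP i).mono fun ω hω =>
      pow_le_pow_left₀ (norm_nonneg _) hω 2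
  simpa using this

lemma memLp_flag_smul (h : IsContamSample Pr P r lam X Xt B Z) (hP : ∀ᵐ x ∂P, ‖x‖ ≤ r)
    (i : Fin n) : MemLp (fun ω => B i ω • (Xt i ω - X i ω)) 2 Pr := by
  refine .of_bound (((h.measurable_flag i).smul ((h.measurable_outlier i).sub
    (h.measurable_clean i))).aestronglyMeasurable) (2 * r) ?_
  filter_upwards [h.ae_norm_outlier_sub_clean_le hP i] with ω hω
  rw [norm_smul, Real.norm_eq_abs, abs_of_nonneg (h.flag_nonneg i ω)]
  exact (mul_le_of_le_one_left (norm_nonneg _) (h.flag_le_one i ω)).trans hω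

lemma integral_eq_integral_clean_add (h : IsContamSample Pr P r lam X Xt B Z)
    (hP : ∀ᵐ x ∂P, ‖x‖ ≤ r) (i : Fin n) :
    Pr[Z i] = Pr[X i] + ∫ ω, B i ω • (Xt i ω - X i ω) ∂Pr := by
  simp_rw [h.eq_add_flag_smul i]
  exact integral_add ((h.memLp_clean hP i).integrable one_le_two)
    ((h.memLp_flag_smul hP i).integrable one_le_two)

lemma sum_smul_sub_integral_eq (h : IsContamSample Pr P r lam X Xt B Z)
    (hP : ∀ᵐ x ∂P, ‖x‖ ≤ r) (w : Fin n → ℝ) (ω : Ω) :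
    ∑ i, w i • (Z i ω - Pr[Z i]) = ∑ i, w i • (X i ω - Pr[X i]) +
      (∑ i, w i • B i ω • (Xt i ω - X i ω) -
        ∫ ω', ∑ i, w i • B i ω' • (Xt i ω' - X i ω') ∂Pr) := by
  rw [integral_finsetSum _ fun i _ =>
    ((h.memLp_flag_smul hP i).integrable one_le_two).fun_smul (w i)]
  simp only [integral_smul, h.integral_eq_integral_clean_add hP]
  simp only [h.eq_add_flag_smul, ← Finset.sum_add_distrib, ← Finset.sum_sub_distrib, ← smul_sub,
    ← smul_add]
  congr! 2 with i
  abel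

variable [CompleteSpace E]

lemma integral_norm_sum_smul_clean_sub_sq_le (h : IsContamSample Pr P r lam X Xt B Z)
    (hP : ∀ᵐ x ∂P, ‖x‖ ≤ r) (w : Fin n → ℝ) :
    ∫ ω, ‖∑ i, w i • (X i ω - Pr[X i])‖ ^ 2 ∂Pr ≤ r ^ 2 * ∑ i, w i ^ 2 := by
  rw [integral_norm_sum_smul_sub_integral_sq (h.memLp_clean hP)
    (fun _ _ hij => h.indepFun_clean hij), Finset.mul_sum]
  refine Finset.sum_le_sum fun i _ => ?_
  rw [mul_comm (r ^ 2)]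
  exact mul_le_mul_of_nonneg_left ((integral_norm_sub_integral_sq_le (h.memLp_clean hP i)).trans
    (h.integral_norm_clean_sq_le hP i)) (sq_nonneg _)

lemma integral_norm_sum_smul_flag_smul_sub_sq_le (h : IsContamSample Pr P r lam X Xt B Z)
    (hP : ∀ᵐ x ∂P, ‖x‖ ≤ r) {w : Fin n → ℝ} (hw : ∀ i, 0 ≤ w i) :
    ∫ ω, ‖∑ i, w i • B i ω • (Xt i ω - X i ω) -
        ∫ ω', ∑ i, w i • B i ω' • (Xt i ω' - X i ω') ∂Pr‖ ^ 2 ∂Pr ≤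
      4 * r ^ 2 * ∫ ω, (∑ i, w i * B i ω) ^ 2 ∂Pr := by
  set T := fun ω => ∑ i, w i • B i ω • (Xt i ω - X i ω)
  have hT : MemLp T 2 Pr := memLp_finsetSum _ fun i _ => (h.memLp_flag_smul hP i).const_smul (w i)
  have hbound : ∀ᵐ ω ∂Pr, ‖T ω‖ ≤ 2 * r * ∑ i, w i * B i ω := by
    filter_upwards [ae_all_iff.2 (h.ae_norm_outlier_sub_clean_le hP)] with ω hω
    calc ‖T ω‖ ≤ ∑ i, ‖w i • B i ω • (Xt i ω - X i ω)‖ := norm_sum_le _ _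
      _ ≤ ∑ i, 2 * r * (w i * B i ω) := by
        gcongr with i
        rw [norm_smul, norm_smul, Real.norm_eq_abs, Real.norm_eq_abs, abs_of_nonneg (hw i),
          abs_of_nonneg (h.flag_nonneg i ω)]
        nlinarith [mul_nonneg (hw i) (h.flag_nonneg i ω), hω i]
      _ = 2 * r * ∑ i, w i * B i ω := (Finset.mul_sum _ _ _).symm
  calc ∫ ω, ‖T ω - Pr[T]‖ ^ 2 ∂Pr ≤ ∫ ω, ‖T ω‖ ^ 2 ∂Pr := integral_norm_sub_integral_sq_le hT
    _ ≤ ∫ ω, 4 * r ^ 2 * (∑ i, w i * B i ω) ^ 2 ∂Pr := by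
      refine integral_mono_ae (hT.integrable_norm_pow two_ne_zero)
        ((h.memLp_sum_mul_flag w).integrable_sq.const_mul _) ?_
      filter_upwards [hbound] with ω hω
      nlinarith [norm_nonneg (T ω)]
    _ = 4 * r ^ 2 * ∫ ω, (∑ i, w i * B i ω) ^ 2 ∂Pr := integral_const_mul _ _

lemma integral_norm_sum_smul_sub_integral_sq_le (h : IsContamSample Pr P r lam X Xt B Z)
    (hP : ∀ᵐ x ∂P, ‖x‖ ≤ r) {w : Fin n → ℝ} (hw : ∀ i, 0 ≤ w i) :
    ∫ ω, ‖∑ i, w i • (Z i ω - Pr[Z i])‖ ^ 2 ∂Pr ≤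
      2 * (r ^ 2 * ∑ i, w i ^ 2) + 2 * (4 * r ^ 2 * ∫ ω, (∑ i, w i * B i ω) ^ 2 ∂Pr) := by
  have hclean : MemLp (fun ω => ∑ i, w i • (X i ω - Pr[X i])) 2 Pr :=
    memLp_finsetSum _ fun i _ => ((h.memLp_clean hP i).sub (memLp_const _)).const_smul (w i)
  have hshift : MemLp (fun ω => ∑ i, w i • B i ω • (Xt i ω - X i ω)) 2 Pr :=
    memLp_finsetSum _ fun i _ => (h.memLp_flag_smul hP i).const_smul (w i)
  simp_rw [h.sum_smul_sub_integral_eq hP w]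
  refine (integral_norm_add_sq_le hclean (hshift.sub (memLp_const _))).trans ?_
  gcongr
  · exact h.integral_norm_sum_smul_clean_sub_sq_le hP w
  · exact h.integral_norm_sum_smul_flag_smul_sub_sq_le hP hw

end IsContamSample

theorem bounded_mean_estimation_variance_upper_bound_general
    (n d : ℕ) (r : ℝ)
    (lam : Fin n → ℝ) (hlam : ∀ i, lam i ∈ Set.Icc (0:ℝ) 1)
    (P : Measure (EuclideanSpace ℝ (Fin d)))
    (hP : ∀ᵐ x ∂P, ‖x‖ ≤ r)
    {Ω : Type*} [MeasurableSpace Ω] (Pr : Measure Ω) [IsProbabilityMeasure Pr]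
    (X Xt : Fin n → Ω → EuclideanSpace ℝ (Fin d)) (B : Fin n → Ω → ℝ)
    (Z : Fin n → Ω → EuclideanSpace ℝ (Fin d))
    (hsample : IsContamSample Pr P r lam X Xt B Z)
    (w : Fin n → ℝ) (hw : w ∈ stdSimplex ℝ (Fin n)) :
    ∫ ω, ‖∑ i, w i • (Z i ω - ∫ ω', Z i ω' ∂Pr)‖^2 ∂Pr ≤
      7 * r^2 * (∑ i, (w i)^2) + 16 * r^2 * (∑ i, w i * lam i)^2 := by
  have hw2 : 0 ≤ ∑ i, w i ^ 2 := Finset.sum_nonneg fun i _ => sq_nonneg (w i)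
  have hwlam := sq_nonneg (∑ i, w i * lam i)
  calc ∫ ω, ‖∑ i, w i • (Z i ω - Pr[Z i])‖ ^ 2 ∂Pr
      ≤ 2 * (r ^ 2 * ∑ i, w i ^ 2) + 2 * (4 * r ^ 2 * ∫ ω, (∑ i, w i * B i ω) ^ 2 ∂Pr) :=
        hsample.integral_norm_sum_smul_sub_integral_sq_le hP hw.1
    _ ≤ 2 * (r ^ 2 * ∑ i, w i ^ 2) +
          2 * (4 * r ^ 2 * ((∑ i, w i ^ 2) / 4 + (∑ i, w i * lam i) ^ 2)) := by
        gcongr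
        exact hsample.integral_sq_sum_mul_flag_le (fun i => (hlam i).1) w
    _ ≤ 7 * r ^ 2 * ∑ i, w i ^ 2 + 16 * r ^ 2 * (∑ i, w i * lam i) ^ 2 := by
        nlinarith [mul_nonneg (sq_nonneg r) hw2, mul_nonneg (sq_nonneg r) hwlam]

/-- for a `λ`-contaminated sample of a distribution `P` on `ℝ^d` supported in
the ball of radius `r`, the variance term of every simplex-weighted linear estimator satisfies
`E[‖Σᵢ wᵢ(Zᵢ − E[Zᵢ])‖²] ≤ 7r²‖w‖₂² + 16r²(wᵀλ)²`. -/
theorem bounded_mean_estimation_variance_upper_bound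
    (n d : ℕ) (hn : 1 ≤ n) (hd : 1 ≤ d) (r : ℝ) (hr : 0 < r)
    (lam : Fin n → ℝ) (hlam : ∀ i, lam i ∈ Set.Icc (0:ℝ) 1)
    (P : Measure (EuclideanSpace ℝ (Fin d))) [IsProbabilityMeasure P]
    (hP : ∀ᵐ x ∂P, ‖x‖ ≤ r)
    {Ω : Type*} [MeasurableSpace Ω] (Pr : Measure Ω) [IsProbabilityMeasure Pr]
    (X Xt : Fin n → Ω → EuclideanSpace ℝ (Fin d)) (B : Fin n → Ω → ℝ)
    (Z : Fin n → Ω → EuclideanSpace ℝ (Fin d))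
    (hsample : IsContamSample Pr P r lam X Xt B Z)
    (w : Fin n → ℝ) (hw : w ∈ stdSimplex ℝ (Fin n)) :
    ∫ ω, ‖∑ i, w i • (Z i ω - ∫ ω', Z i ω' ∂Pr)‖^2 ∂Pr ≤
      7 * r^2 * (∑ i, (w i)^2) + 16 * r^2 * (∑ i, w i * lam i)^2 :=
  bounded_mean_estimation_variance_upper_bound_general n d r lam hlam P hP Pr X Xt B Z hsample w hw
end
end

section
/- Let n ≥ 1, c > 0 and λ ∈ [0,1]^n with λ₁ ≤ λ₂ ≤ … ≤ λₙ, and let w* be the unique minimizer of w ↦ ‖w‖₂² + c(wᵀλ)² over the probability simplex Δₙ. For k ∈ {1,…,n} write S₁(k) = Σ_{i≤k} λᵢ and S₂(k) = Σ_{i≤k} λᵢ². Let m = min{k ∈ {1,…,n} : k = n, or λ_{k+1} ≥ (1 + c·S₂(k))/(c·S₁(k))} (where the right-hand side is interpreted as +∞ when S₁(k) = 0). Then m is exactly the number of nonzero coordinates of w*, and with β = (1 + c·S₂(m)) / (m(1 + c·S₂(m)) − c·S₁(m)²) and α = c·S₁(m)·β / (1 + c·S₂(m)), one has w*ᵢ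 = β − α·λᵢ for i ≤ m and w*ᵢ = 0 for i > m. -/
/-!
The objective is a convex quadratic with gradient `gᵢ = 2wᵢ + 2c(wᵀλ)λᵢ` whose Hessian
dominates `2·I`, so a point of the simplex satisfying the KKT conditions (`gᵢ ≥ μ` for all `i`,
with equality where `wᵢ ≠ 0`) beats every other point `v` by at least `‖v - w‖₂²`; in particular
it is the unique minimizer. For the candidate supported on the first `k` coordinates,
`wᵢ = (1 + c S₂(k) - c S₁(k) λᵢ) / D` with `D = k(1 + c S₂(k)) - c S₁(k)² ≥ k` (Cauchy–Schwarz),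
one finds `c wᵀλ = c S₁(k) / D`, so the KKT conditions say exactly `c S₁(k) λᵢ < 1 + c S₂(k)`
for `i < k` and `c S₁(k) λᵢ ≥ 1 + c S₂(k)` for `i ≥ k`. For `k = m` the first follows from the
minimality of `m` and the monotonicity of `λ`, the second from the defining inequality of `m`.
-/

def obj {n : ℕ} (c : ℝ) (lam w : Fin n → ℝ) : ℝ :=
  (∑ i, (w i) ^ 2) + c * (∑ i, w i * lam i) ^ 2

def S1 {n : ℕ} (lam : Fin n → ℝ) (k : ℕ) : ℝ :=
  ∑ i ∈ Finset.univ.filter fun i : Fin n => (i : ℕ) < k, lam i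

def S2 {n : ℕ} (lam : Fin n → ℝ) (k : ℕ) : ℝ :=
  ∑ i ∈ Finset.univ.filter fun i : Fin n => (i : ℕ) < k, (lam i) ^ 2

noncomputable def mIdx (n : ℕ) (c : ℝ) (lam : Fin n → ℝ) : ℕ :=
  sInf {k : ℕ | 1 ≤ k ∧ k ≤ n ∧ (k = n ∨ ∃ h : k < n,
    0 < S1 lam k ∧ (1 + c * S2 lam k) / (c * S1 lam k) ≤ lam ⟨k, h⟩)}

open Finset

section Objective

variable {n : ℕ} (c : ℝ) (lam : Fin n → ℝ)

def objGrad (w : Fin n → ℝ) (i : Fin n) : ℝ :=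
  2 * w i + 2 * c * (∑ j, w j * lam j) * lam i

lemma obj_eq_add_sum_grad_mul_sub (w v : Fin n → ℝ) :
    obj c lam v = obj c lam w + ∑ i, objGrad c lam w i * (v i - w i)
      + ((∑ i, (v i - w i) ^ 2) + c * (∑ i, (v i - w i) * lam i) ^ 2) := by
  have hsq : ∑ i, v i ^ 2 = ∑ i, (w i ^ 2 + 2 * (w i * (v i - w i)) + (v i - w i) ^ 2) :=
    sum_congr rfl fun i _ => by ring
  have hlin : ∑ i, v i * lam i = ∑ i, w i * lam i + ∑ i, (v i - w i) * lam i := by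
    rw [← sum_add_distrib]; exact sum_congr rfl fun i _ => by ring
  have hgrad : ∑ i, objGrad c lam w i * (v i - w i) = 2 * ∑ i, w i * (v i - w i)
      + 2 * c * (∑ j, w j * lam j) * ∑ i, (v i - w i) * lam i := by
    simp only [objGrad, mul_sum, ← sum_add_distrib]
    exact sum_congr rfl fun i _ => by ring
  rw [obj, obj, hgrad, hsq, hlin, sum_add_distrib, sum_add_distrib, ← mul_sum]
  ring

variable {c lam}

lemma obj_add_sum_sq_sub_le (hc : 0 ≤ c) {w v : Fin n → ℝ} {μ : ℝ} (hw : ∑ i, w i = 1)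
    (hge : ∀ i, μ ≤ objGrad c lam w i) (heq : ∀ i, w i ≠ 0 → objGrad c lam w i = μ)
    (hv : v ∈ stdSimplex ℝ (Fin n)) :
    obj c lam w + ∑ i, (v i - w i) ^ 2 ≤ obj c lam v := by
  have hgv : μ ≤ ∑ i, objGrad c lam w i * v i :=
    calc μ = ∑ i, μ * v i := by rw [← mul_sum, hv.2, mul_one]
      _ ≤ _ := sum_le_sum fun i _ => mul_le_mul_of_nonneg_right (hge i) (hv.1 i)
  have hgw : ∑ i, objGrad c lam w i * w i = μ := by
    rw [← mul_one μ, ← hw, mul_sum]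
    refine sum_congr rfl fun i _ => ?_
    by_cases hwi : w i = 0
    · simp [hwi]
    · rw [heq i hwi]
  have hfirst : 0 ≤ ∑ i, objGrad c lam w i * (v i - w i) := by
    simp only [mul_sub, sum_sub_distrib]
    linarith
  rw [obj_eq_add_sum_grad_mul_sub c lam w v]
  nlinarith [sq_nonneg (∑ i, (v i - w i) * lam i)]

lemma eq_of_obj_le (hc : 0 ≤ c) {w v : Fin n → ℝ} {μ : ℝ} (hw : ∑ i, w i = 1)
    (hge : ∀ i, μ ≤ objGrad c lam w i) (heq : ∀ i, w i ≠ 0 → objGrad c lam w i = μ)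
    (hv : v ∈ stdSimplex ℝ (Fin n)) (hvw : obj c lam v ≤ obj c lam w) : v = w := by
  have hsq : ∑ i, (v i - w i) ^ 2 ≤ 0 := by
    linarith [obj_add_sum_sq_sub_le hc hw hge heq hv]
  have hzero := (sum_eq_zero_iff_of_nonneg fun i _ => sq_nonneg (v i - w i)).mp
    (hsq.antisymm (sum_nonneg fun i _ => sq_nonneg _))
  funext i
  exact sub_eq_zero.mp (pow_eq_zero_iff two_ne_zero |>.mp (hzero i (mem_univ i)))

end Objective

section PartialSums

variable {n : ℕ} (lam : Fin n → ℝ)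

lemma filter_val_lt_succ {k : ℕ} (hk : k < n) :
    (univ.filter fun i : Fin n => (i : ℕ) < k + 1)
      = insert ⟨k, hk⟩ (univ.filter fun i : Fin n => (i : ℕ) < k) := by
  ext i
  simp only [mem_filter, mem_univ, true_and, mem_insert, Fin.ext_iff]
  omega

lemma S1_succ {k : ℕ} (hk : k < n) : S1 lam (k + 1) = S1 lam k + lam ⟨k, hk⟩ := by
  rw [S1, filter_val_lt_succ hk, sum_insert (by simp), add_comm]
  rfl

lemma S2_succ {k : ℕ} (hk : k < n) : S2 lam (k + 1) = S2 lam k + lam ⟨k, hk⟩ ^ 2 := by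
  rw [S2, filter_val_lt_succ hk, sum_insert (by simp), add_comm]
  rfl

@[simp] lemma S1_zero : S1 lam 0 = 0 := by simp [S1]

lemma S1_nonneg (hlam : ∀ i, 0 ≤ lam i) (k : ℕ) : 0 ≤ S1 lam k :=
  sum_nonneg fun i _ => hlam i

lemma S2_nonneg (k : ℕ) : 0 ≤ S2 lam k :=
  sum_nonneg fun i _ => sq_nonneg (lam i)

lemma sq_S1_le_mul_S2 (k : ℕ) : S1 lam k ^ 2 ≤ k * S2 lam k := by
  have hcard : ((univ.filter fun i : Fin n => (i : ℕ) < k).card : ℝ) ≤ k := by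
    rw [Fin.card_filter_val_lt]
    exact_mod_cast min_le_right n k
  exact (sq_sum_le_card_mul_sum_sq ..).trans
    (mul_le_mul_of_nonneg_right hcard (S2_nonneg lam k))

end PartialSums

section ThresholdWeights

variable {n : ℕ} {c : ℝ} {lam : Fin n → ℝ} {k : ℕ}

variable (c lam k) in
def thresholdDenom : ℝ := k * (1 + c * S2 lam k) - c * S1 lam k ^ 2

variable (c lam k) in
noncomputable def thresholdWeights (i : Fin n) : ℝ :=
  if (i : ℕ) < k then (1 + c * S2 lam k - c * S1 lam k * lam i) / thresholdDenom c lam k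
  else 0

lemma thresholdDenom_pos (hc : 0 ≤ c) (hk : 1 ≤ k) : 0 < thresholdDenom c lam k := by
  have hk' : (1 : ℝ) ≤ k := by exact_mod_cast hk
  unfold thresholdDenom
  nlinarith [sq_S1_le_mul_S2 lam k]

lemma sum_thresholdWeights (hc : 0 ≤ c) (hk : 1 ≤ k) (hkn : k ≤ n) :
    ∑ i, thresholdWeights c lam k i = 1 := by
  simp only [thresholdWeights]
  rw [← sum_filter, ← sum_div, sum_sub_distrib, sum_const, ← mul_sum,
    Fin.card_filter_val_lt, min_eq_right hkn, nsmul_eq_mul, div_eq_one_iff_eq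
      (thresholdDenom_pos hc hk).ne']
  unfold thresholdDenom S1
  ring

lemma sum_thresholdWeights_mul :
    ∑ i, thresholdWeights c lam k i * lam i = S1 lam k / thresholdDenom c lam k := by
  simp only [thresholdWeights, ite_mul, zero_mul]
  rw [← sum_filter]
  have hterm : ∀ i, (1 + c * S2 lam k - c * S1 lam k * lam i) / thresholdDenom c lam k * lam i
      = ((1 + c * S2 lam k) * lam i - c * S1 lam k * lam i ^ 2) / thresholdDenom c lam k :=
    fun i => by ring
  simp only [hterm, ← sum_div, sum_sub_distrib, ← mul_sum]
  unfold S1 S2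
  ring

lemma objGrad_thresholdWeights {i : Fin n} :
    objGrad c lam (thresholdWeights c lam k) i = 2 / thresholdDenom c lam k *
      if (i : ℕ) < k then 1 + c * S2 lam k else c * S1 lam k * lam i := by
  rw [objGrad, sum_thresholdWeights_mul, thresholdWeights]
  split_ifs <;> ring

lemma thresholdWeights_pos (hc : 0 ≤ c) (hk : 1 ≤ k) {i : Fin n} (hi : (i : ℕ) < k)
    (hin : c * S1 lam k * lam i < 1 + c * S2 lam k) : 0 < thresholdWeights c lam k i := by
  rw [thresholdWeights, if_pos hi]
  exact div_pos (sub_pos.mpr hin) (thresholdDenom_pos hc hk)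

lemma thresholdWeights_ne_zero_iff (hc : 0 ≤ c) (hk : 1 ≤ k)
    (hin : ∀ i : Fin n, (i : ℕ) < k → c * S1 lam k * lam i < 1 + c * S2 lam k) {i : Fin n} :
    thresholdWeights c lam k i ≠ 0 ↔ (i : ℕ) < k := by
  refine ⟨fun h => ?_, fun hi => (thresholdWeights_pos hc hk hi (hin i hi)).ne'⟩
  by_contra hi
  exact h (if_neg hi)

lemma thresholdWeights_mem_stdSimplex (hc : 0 ≤ c) (hk : 1 ≤ k)
    (hin : ∀ i : Fin n, (i : ℕ) < k → c * S1 lam k * lam i < 1 + c * S2 lam k) (hkn : k ≤ n) :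
    thresholdWeights c lam k ∈ stdSimplex ℝ (Fin n) := by
  refine ⟨fun i => ?_, sum_thresholdWeights hc hk hkn⟩
  by_cases hi : (i : ℕ) < k
  · exact (thresholdWeights_pos hc hk hi (hin i hi)).le
  · exact (if_neg hi).ge

lemma eq_thresholdWeights_of_obj_le (hc : 0 ≤ c) (hk : 1 ≤ k)
    (hin : ∀ i : Fin n, (i : ℕ) < k → c * S1 lam k * lam i < 1 + c * S2 lam k) (hkn : k ≤ n)
    (hout : ∀ i : Fin n, k ≤ (i : ℕ) → 1 + c * S2 lam k ≤ c * S1 lam k * lam i)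
    {v : Fin n → ℝ} (hv : v ∈ stdSimplex ℝ (Fin n))
    (hvw : obj c lam v ≤ obj c lam (thresholdWeights c lam k)) :
    v = thresholdWeights c lam k := by
  have hD := thresholdDenom_pos (lam := lam) hc hk
  refine eq_of_obj_le hc (sum_thresholdWeights hc hk hkn) (μ := 2 / thresholdDenom c lam k *
    (1 + c * S2 lam k)) (fun i => ?_) (fun i hi => ?_) hv hvw
  · rw [objGrad_thresholdWeights]
    split_ifs with hi
    · rfl
    · exact mul_le_mul_of_nonneg_left (hout i (not_lt.mp hi)) (by positivity)
  · rw [objGrad_thresholdWeights, if_pos ((thresholdWeights_ne_zero_iff hc hk hin).mp hi)]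

end ThresholdWeights

section ThresholdIndex

variable {n : ℕ} {c : ℝ} {lam : Fin n → ℝ}

lemma mIdx_mem (hn : 1 ≤ n) : 1 ≤ mIdx n c lam ∧ mIdx n c lam ≤ n ∧
    (mIdx n c lam = n ∨ ∃ h : mIdx n c lam < n, 0 < S1 lam (mIdx n c lam) ∧
      (1 + c * S2 lam (mIdx n c lam)) / (c * S1 lam (mIdx n c lam)) ≤ lam ⟨mIdx n c lam, h⟩) :=
  Nat.sInf_mem (s := {k : ℕ | 1 ≤ k ∧ k ≤ n ∧ (k = n ∨ ∃ h : k < n,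
    0 < S1 lam k ∧ (1 + c * S2 lam k) / (c * S1 lam k) ≤ lam ⟨k, h⟩)}) ⟨n, hn, le_rfl, Or.inl rfl⟩

lemma mul_S1_lt_of_lt_mIdx (hc : 0 < c) (hlam : ∀ i, 0 ≤ lam i) {k : ℕ} (hkm : k < mIdx n c lam)
    (hkn : k < n) : c * S1 lam k * lam ⟨k, hkn⟩ < 1 + c * S2 lam k := by
  have hS2 := S2_nonneg lam k
  rcases (S1_nonneg lam hlam k).eq_or_lt with hS1 | hS1
  · rw [← hS1]
    nlinarith
  have hnot := Nat.notMem_of_lt_sInf hkm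
  simp only [Set.mem_ofPred_eq, not_and, not_or, not_exists, not_le] at hnot
  have hk1 : 1 ≤ k := Nat.one_le_iff_ne_zero.mpr fun hk0 => by simp [hk0] at hS1
  have hlt := (hnot hk1 hkn.le).2 hkn hS1
  rw [lt_div_iff₀ (by positivity)] at hlt
  linarith

lemma mul_S1_mIdx_lt (hn : 1 ≤ n) (hc : 0 < c) (hlam : ∀ i, 0 ≤ lam i) (hmono : Monotone lam)
    {i : Fin n} (hi : (i : ℕ) < mIdx n c lam) :
    c * S1 lam (mIdx n c lam) * lam i < 1 + c * S2 lam (mIdx n c lam) := by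
  obtain ⟨hm1, hmn, -⟩ := mIdx_mem (c := c) (lam := lam) hn
  obtain ⟨k, hk⟩ : ∃ k, mIdx n c lam = k + 1 := ⟨mIdx n c lam - 1, by omega⟩
  have hkn : k < n := by omega
  have hstep := mul_S1_lt_of_lt_mIdx hc hlam (by omega : k < mIdx n c lam) hkn
  have hik : lam i ≤ lam ⟨k, hkn⟩ := hmono (Fin.mk_le_mk.mpr (by omega) : i ≤ ⟨k, hkn⟩)
  have hS1 := S1_nonneg lam hlam (k + 1)
  rw [hk, S1_succ lam hkn, S2_succ lam hkn]
  rw [S1_succ lam hkn] at hS1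
  nlinarith [mul_le_mul_of_nonneg_left hik (mul_nonneg hc.le hS1)]

lemma le_mul_S1_mIdx (hc : 0 < c) (hmono : Monotone lam) {i : Fin n}
    (hi : mIdx n c lam ≤ (i : ℕ)) :
    1 + c * S2 lam (mIdx n c lam) ≤ c * S1 lam (mIdx n c lam) * lam i := by
  obtain ⟨-, -, hm | ⟨hmn, hS1, hthr⟩⟩ := mIdx_mem (c := c) (lam := lam) (by omega)
  · omega
  rw [div_le_iff₀' (by positivity)] at hthr
  exact hthr.trans (mul_le_mul_of_nonneg_left (hmono (Fin.mk_le_mk.mpr hi)) (by positivity))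

end ThresholdIndex

/-- closed form of the unique minimizer of `w ↦ ‖w‖₂² + c(wᵀλ)²` over the
probability simplex when `λ` is sorted in nondecreasing order: with `m`, `β`, `α` as above,
`w*ᵢ = β − αλᵢ` for `i ≤ m` and `w*ᵢ = 0` for `i > m`, and `m` is exactly the number of
nonzero coordinates of `w*`. -/
theorem minimizer_closed_form (n : ℕ) (hn : 1 ≤ n) (c : ℝ) (hc : 0 < c)
    (lam : Fin n → ℝ) (hlam : ∀ i, lam i ∈ Set.Icc (0:ℝ) 1) (hsorted : Monotone lam)
    (w : Fin n → ℝ) (hw : w ∈ stdSimplex ℝ (Fin n))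
    (hmin : ∀ v ∈ stdSimplex ℝ (Fin n), obj c lam w ≤ obj c lam v) :
    mIdx n c lam = (Finset.univ.filter fun i : Fin n => w i ≠ 0).card ∧
    ∀ i : Fin n,
      ((i : ℕ) < mIdx n c lam →
        w i = (1 + c * S2 lam (mIdx n c lam)) /
            ((mIdx n c lam : ℝ) * (1 + c * S2 lam (mIdx n c lam))
              - c * (S1 lam (mIdx n c lam)) ^ 2)
          - (c * S1 lam (mIdx n c lam) *
              ((1 + c * S2 lam (mIdx n c lam)) /
                ((mIdx n c lam : ℝ) * (1 + c * S2 lam (mIdx n c lam))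
                  - c * (S1 lam (mIdx n c lam)) ^ 2)) /
              (1 + c * S2 lam (mIdx n c lam))) * lam i) ∧
      (mIdx n c lam ≤ (i : ℕ) → w i = 0) := by
  have hl0 : ∀ i, 0 ≤ lam i := fun i => (hlam i).1
  obtain ⟨hm1, hmn, -⟩ := mIdx_mem (c := c) (lam := lam) hn
  set m := mIdx n c lam
  have hin : ∀ i : Fin n, (i : ℕ) < m → c * S1 lam m * lam i < 1 + c * S2 lam m :=
    fun i => mul_S1_mIdx_lt hn hc hl0 hsorted
  have hout : ∀ i : Fin n, m ≤ (i : ℕ) → 1 + c * S2 lam m ≤ c * S1 lam m * lam i :=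
    fun i => le_mul_S1_mIdx hc hsorted
  have hwt := thresholdWeights_mem_stdSimplex hc.le hm1 hin hmn
  obtain rfl : w = thresholdWeights c lam m :=
    eq_thresholdWeights_of_obj_le hc.le hm1 hin hmn hout hw (hmin _ hwt)
  refine ⟨?_, fun i => ⟨fun hi => ?_, fun hi => if_neg (not_lt.mpr hi)⟩⟩
  · simp_rw [thresholdWeights_ne_zero_iff hc.le hm1 hin]
    rw [Fin.card_filter_val_lt, min_eq_right hmn]
  · have hE : (0 : ℝ) < 1 + c * S2 lam m := by have := S2_nonneg lam m; positivity
    rw [thresholdWeights, if_pos hi, thresholdDenom]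
    field_simp
end
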